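/- Let f, g be bounded Borel-measurable real functions on a measurable space Z with g strictly positive, bounded above, and bounded away from zero. Let Z_1, ..., Z_k be i.i.d. with law ξ and ξ_k the empirical measure. With α = sup_{z',z''} |f(z')/g(z') − f(z'')/g(z'')| and β = sup_{z',z''} g(z')/g(z''), we have (E[|ξ_k(f)/ξ_k(g) − ξ(f)/ξ(g)|²])^{1/2} ≤ 2αβ/√k. -/

import Mathlib

/-!
Put `r = ξ(f) / ξ(g)` and `h = f - r g`. Then `ξ(h) = 0`, and `|h| ≤ a g` because `r` is a
`g`-weighted average of `f / g`. The error of the ratio estimator is `q = ξ_k(h) / ξ_k(g)`, so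
`|q| ≤ a`, and from `ξ(g) q = ξ_k(h) - q (ξ_k(g) - ξ(g))` we get
`ξ(g)² q² ≤ 2 ξ_k(h)² + 2 a² (ξ_k(g) - ξ(g))²`. In expectation the right side is
`2 Var(h) / k + 2 a² Var(g) / k`. Both variances are at most `a² ξ(g²)` and `ξ(g²)` respectively,
and `ξ(g²) ≤ b ξ(g)²` since `g ≤ b ξ(g)` pointwise; hence `E q² ≤ 4 a² b / k ≤ (2 a b)² / k`.
-/

open MeasureTheory ProbabilityTheory

section WeightedAverage

variable {α : Type*} [MeasurableSpace α] {μ : Measure α} {f g : α → ℝ} {a b : ℝ}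

lemma integral_pos_of_forall_pos [NeZero μ] (hgi : Integrable g μ) (hg : ∀ z, 0 < g z) :
    0 < ∫ z, g z ∂μ := by
  refine (integral_pos_iff_support_of_nonneg (fun z => (hg z).le) hgi).2 ?_
  rw [Function.support_eq_univ fun z => (hg z).ne']
  exact Measure.measure_univ_pos.2 (NeZero.ne μ)

/-- The ratio `∫ f / ∫ g` is a `g`-weighted average of `f / g`, so it lies within the
oscillation of `f / g`. -/
lemma abs_div_sub_integral_div_integral_le [NeZero μ] (hfi : Integrable f μ)
    (hgi : Integrable g μ) (hg : ∀ z, 0 < g z)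
    (ha : ∀ z z', |f z / g z - f z' / g z'| ≤ a) (z : α) :
    |f z / g z - (∫ z', f z' ∂μ) / ∫ z', g z' ∂μ| ≤ a := by
  have hI := integral_pos_of_forall_pos hgi hg
  have hweighted : f z / g z * (∫ z', g z' ∂μ) - ∫ z', f z' ∂μ
      = ∫ z', g z' * (f z / g z - f z' / g z') ∂μ := by
    rw [← integral_const_mul (f z / g z), ← integral_sub (hgi.const_mul _) hfi]
    refine integral_congr_ae (Filter.Eventually.of_forall fun z' => ?_)
    field_simp [(hg z').ne']
  have hbound : |∫ z', g z' * (f z / g z - f z' / g z') ∂μ| ≤ a * ∫ z', g z' ∂μ := by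
    rw [← Real.norm_eq_abs, ← integral_const_mul a]
    refine norm_integral_le_of_norm_le (hgi.const_mul a)
      (Filter.Eventually.of_forall fun z' => ?_)
    rw [Real.norm_eq_abs, abs_mul, abs_of_pos (hg z'), mul_comm a]
    exact mul_le_mul_of_nonneg_left (ha z z') (hg z').le
  rw [← hweighted] at hbound
  rwa [sub_div' hI.ne', abs_div, abs_of_pos hI, div_le_iff₀ hI]

lemma abs_sub_integral_div_integral_mul_le [NeZero μ] (hfi : Integrable f μ)
    (hgi : Integrable g μ) (hg : ∀ z, 0 < g z)
    (ha : ∀ z z', |f z / g z - f z' / g z'| ≤ a) (z : α) :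
    |f z - (∫ z', f z' ∂μ) / (∫ z', g z' ∂μ) * g z| ≤ a * g z := by
  have hz : f z - (∫ z', f z' ∂μ) / (∫ z', g z' ∂μ) * g z
      = g z * (f z / g z - (∫ z', f z' ∂μ) / ∫ z', g z' ∂μ) := by
    field_simp [(hg z).ne']
  rw [hz, abs_mul, abs_of_pos (hg z), mul_comm a]
  exact mul_le_mul_of_nonneg_left (abs_div_sub_integral_div_integral_le hfi hgi hg ha z) (hg z).le

lemma integral_sq_le_mul_sq_integral [IsProbabilityMeasure μ] (hg2 : MemLp g 2 μ)
    (hg : ∀ z, 0 ≤ g z) (hb : ∀ z z', g z ≤ b * g z') :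
    ∫ z, g z ^ 2 ∂μ ≤ b * (∫ z, g z ∂μ) ^ 2 := by
  have hgi := hg2.integrable one_le_two
  have hmax : ∀ z, g z ≤ b * ∫ z', g z' ∂μ := fun z =>
    calc g z = ∫ _, g z ∂μ := by simp
      _ ≤ ∫ z', b * g z' ∂μ := integral_mono (integrable_const _) (hgi.const_mul b) (hb z)
      _ = b * ∫ z', g z' ∂μ := integral_const_mul _ _
  calc ∫ z, g z ^ 2 ∂μ ≤ ∫ z, (b * ∫ z', g z' ∂μ) * g z ∂μ :=
        integral_mono hg2.integrable_sq (hgi.const_mul _) fun z => by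
          rw [sq]; exact mul_le_mul_of_nonneg_right (hmax z) (hg z)
    _ = b * (∫ z, g z ∂μ) ^ 2 := by rw [integral_const_mul]; ring

lemma variance_le_sq_mul_integral_sq [IsProbabilityMeasure μ] (hf2 : MemLp f 2 μ)
    (hg2 : MemLp g 2 μ) (hfg : ∀ z, |f z| ≤ a * g z) :
    Var[f; μ] ≤ a ^ 2 * ∫ z, g z ^ 2 ∂μ := by
  calc Var[f; μ] ≤ ∫ z, f z ^ 2 ∂μ := variance_le_expectation_sq hf2.aestronglyMeasurable
    _ ≤ ∫ z, a ^ 2 * g z ^ 2 ∂μ :=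
        integral_mono hf2.integrable_sq (hg2.integrable_sq.const_mul _) fun z => by
          rw [← mul_pow, ← sq_abs (f z)]
          exact pow_le_pow_left₀ (abs_nonneg _) (hfg z) 2
    _ = a ^ 2 * ∫ z, g z ^ 2 ∂μ := integral_const_mul _ _

end WeightedAverage

/-- `(t / s) m = t - (t / s) (s - m)`, and `|t / s| ≤ a`. -/
lemma div_sq_mul_sq_le {s t m a : ℝ} (hs : 0 < s) (ht : |t| ≤ a * s) :
    (t / s) ^ 2 * m ^ 2 ≤ 2 * t ^ 2 + 2 * a ^ 2 * (s - m) ^ 2 := by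
  set q := t / s
  have hq : q ^ 2 ≤ a ^ 2 := by
    rw [← sq_abs]
    refine pow_le_pow_left₀ (abs_nonneg q) ?_ 2
    rwa [abs_div, abs_of_pos hs, div_le_iff₀ hs]
  have htq : t = q * s := (div_mul_cancel₀ t hs.ne').symm
  rw [htq]
  nlinarith [sq_nonneg (q * s + q * (s - m)), mul_le_mul_of_nonneg_right hq (sq_nonneg (s - m))]

section EmpiricalMean

variable {α Ω : Type*} {k : ℕ}

noncomputable def empiricalMean (Z : Fin k → Ω → α) (u : α → ℝ) (ω : Ω) : ℝ :=
  (k : ℝ)⁻¹ * ∑ i, u (Z i ω)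

variable (Z : Fin k → Ω → α) {u v : α → ℝ}

lemma empiricalMean_sub_const_mul (r : ℝ) (ω : Ω) :
    empiricalMean Z (fun z => u z - r * v z) ω
      = empiricalMean Z u ω - r * empiricalMean Z v ω := by
  simp only [empiricalMean, Finset.sum_sub_distrib, ← Finset.mul_sum]
  ring

lemma abs_empiricalMean_le {a : ℝ} (h : ∀ z, |u z| ≤ a * v z) (ω : Ω) :
    |empiricalMean Z u ω| ≤ a * empiricalMean Z v ω := by
  rw [empiricalMean, empiricalMean, abs_mul, abs_inv, Nat.abs_cast, mul_left_comm,
    Finset.mul_sum]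
  gcongr
  exact (Finset.abs_sum_le_sum_abs _ _).trans (Finset.sum_le_sum fun i _ => h _)

lemma empiricalMean_pos [NeZero k] (hu : ∀ z, 0 < u z) (ω : Ω) : 0 < empiricalMean Z u ω := by
  have hk : (0 : ℝ) < k := Nat.cast_pos.2 (NeZero.pos k)
  have hsum : 0 < ∑ i, u (Z i ω) := Finset.sum_pos (fun i _ => hu _) Finset.univ_nonempty
  exact mul_pos (inv_pos.2 hk) hsum

lemma sq_mul_sq_empiricalMean_div_sub_le [NeZero k] {a r : ℝ} (hv : ∀ z, 0 < v z)
    (huv : ∀ z, |u z - r * v z| ≤ a * v z) (m : ℝ) (ω : Ω) :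
    m ^ 2 * (empiricalMean Z u ω / empiricalMean Z v ω - r) ^ 2
      ≤ 2 * empiricalMean Z (fun z => u z - r * v z) ω ^ 2
        + 2 * a ^ 2 * (empiricalMean Z v ω - m) ^ 2 := by
  have hSv := empiricalMean_pos Z hv ω
  have hratio : empiricalMean Z u ω / empiricalMean Z v ω - r
      = empiricalMean Z (fun z => u z - r * v z) ω / empiricalMean Z v ω := by
    rw [empiricalMean_sub_const_mul, sub_div, mul_div_cancel_right₀ _ hSv.ne']
  rw [hratio, mul_comm]
  exact div_sq_mul_sq_le hSv (abs_empiricalMean_le Z huv ω)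

variable [MeasurableSpace α] [MeasurableSpace Ω] {P : Measure Ω} {ξ : Measure α} {Z}

lemma memLp_empiricalMean (hZ : ∀ i, MeasurePreserving (Z i) P ξ) (hu : MemLp u 2 ξ) :
    MemLp (empiricalMean Z u) 2 P :=
  (memLp_finsetSum _ fun i _ => hu.comp_measurePreserving (hZ i)).const_mul _

lemma integral_empiricalMean [NeZero k] (hZ : ∀ i, MeasurePreserving (Z i) P ξ)
    (hu : Integrable u ξ) :
    ∫ ω, empiricalMean Z u ω ∂P = ∫ z, u z ∂ξ := by
  have hk : (k : ℝ) ≠ 0 := Nat.cast_ne_zero.2 (NeZero.ne k)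
  have hcomp (i : Fin k) : ∫ ω, u (Z i ω) ∂P = ∫ z, u z ∂ξ := by
    rw [← (hZ i).map_eq,
      integral_map (hZ i).aemeasurable ((hZ i).map_eq ▸ hu.aestronglyMeasurable)]
  simp only [empiricalMean]
  rw [integral_const_mul, integral_finsetSum (f := fun i ω => u (Z i ω)) _ fun i _ =>
    (hZ i).integrable_comp_of_integrable hu, Finset.sum_congr rfl fun i _ => hcomp i]
  simp [hk]

lemma variance_empiricalMean (hZ : ∀ i, MeasurePreserving (Z i) P ξ) (hindep : iIndepFun Z P)
    (hu : Measurable u) (hu2 : MemLp u 2 ξ) :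
    Var[empiricalMean Z u; P] = Var[u; ξ] / k := by
  have hsum : empiricalMean Z u = fun ω => (k : ℝ)⁻¹ * (∑ i, fun ω => u (Z i ω)) ω := by
    ext ω; simp [empiricalMean]
  rw [hsum, variance_const_mul, IndepFun.variance_sum (X := fun i ω => u (Z i ω))
    (fun i _ => hu2.comp_measurePreserving (hZ i))
    (fun i _ j _ hij => (hindep.indepFun hij).comp hu hu)]
  simp only [(hZ _).variance_fun_comp hu.aemeasurable, Finset.sum_const, Finset.card_univ,
    Fintype.card_fin, nsmul_eq_mul]
  obtain rfl | hk := eq_or_ne k 0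
  · simp
  · field_simp

lemma integral_sq_empiricalMean_sub [NeZero k] [IsFiniteMeasure ξ]
    (hZ : ∀ i, MeasurePreserving (Z i) P ξ) (hindep : iIndepFun Z P) (hu : Measurable u)
    (hu2 : MemLp u 2 ξ) :
    ∫ ω, (empiricalMean Z u ω - ∫ z, u z ∂ξ) ^ 2 ∂P = Var[u; ξ] / k := by
  rw [← variance_empiricalMean hZ hindep hu hu2, variance_eq_integral
    (memLp_empiricalMean hZ hu2).aestronglyMeasurable.aemeasurable,
    integral_empiricalMean hZ (hu2.integrable one_le_two)]

end EmpiricalMean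

section RatioEstimator

variable {α Ω : Type*} [MeasurableSpace α] [MeasurableSpace Ω] {k : ℕ} {Z : Fin k → Ω → α}
  {P : Measure Ω} {ξ : Measure α} {f g : α → ℝ} {a b : ℝ}

theorem integral_sq_empiricalMean_div_sub_le [NeZero k] [IsProbabilityMeasure P]
    [IsProbabilityMeasure ξ] (hZ : ∀ i, MeasurePreserving (Z i) P ξ) (hindep : iIndepFun Z P)
    (hf : Measurable f) (hg : Measurable g) (hf2 : MemLp f 2 ξ) (hg2 : MemLp g 2 ξ)
    (hgpos : ∀ z, 0 < g z) (ha : ∀ z z', |f z / g z - f z' / g z'| ≤ a)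
    (hb : ∀ z z', g z ≤ b * g z') :
    ∫ ω, (empiricalMean Z f ω / empiricalMean Z g ω - (∫ z, f z ∂ξ) / ∫ z, g z ∂ξ) ^ 2 ∂P
      ≤ 4 * a ^ 2 * b / k := by
  set m := ∫ z, g z ∂ξ
  set r := (∫ z, f z ∂ξ) / m
  set h : α → ℝ := fun z => f z - r * g z
  have hfi := hf2.integrable one_le_two
  have hgi := hg2.integrable one_le_two
  have hm : 0 < m := integral_pos_of_forall_pos hgi hgpos
  have hhg := abs_sub_integral_div_integral_mul_le hfi hgi hgpos ha
  have hh2 : MemLp h 2 ξ := hf2.sub (hg2.const_mul r)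
  have hh_mean : ∫ z, h z ∂ξ = 0 := by
    rw [integral_sub hfi (hgi.const_mul r), integral_const_mul, div_mul_cancel₀ _ hm.ne',
      sub_self]
  have hg_sq : ∫ z, g z ^ 2 ∂ξ ≤ b * m ^ 2 :=
    integral_sq_le_mul_sq_integral hg2 (fun z => (hgpos z).le) hb
  have hvar_h : Var[h; ξ] ≤ a ^ 2 * (b * m ^ 2) :=
    (variance_le_sq_mul_integral_sq hh2 hg2 hhg).trans (by gcongr)
  have hvar_g : Var[g; ξ] ≤ b * m ^ 2 :=
    (variance_le_expectation_sq hg2.aestronglyMeasurable).trans hg_sq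
  have hpt (ω : Ω) : m ^ 2 * (empiricalMean Z f ω / empiricalMean Z g ω - r) ^ 2
      ≤ 2 * (empiricalMean Z h ω - ∫ z, h z ∂ξ) ^ 2
        + 2 * a ^ 2 * (empiricalMean Z g ω - m) ^ 2 := by
    rw [hh_mean, sub_zero]
    exact sq_mul_sq_empiricalMean_div_sub_le Z hgpos hhg m ω
  have hint (u : α → ℝ) (hu : MemLp u 2 ξ) (c : ℝ) :
      Integrable (fun ω => (empiricalMean Z u ω - c) ^ 2) P :=
    ((memLp_empiricalMean hZ hu).sub (memLp_const c)).integrable_sq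
  refine le_of_mul_le_mul_left ?_ (pow_pos hm 2)
  calc m ^ 2 * ∫ ω, (empiricalMean Z f ω / empiricalMean Z g ω - r) ^ 2 ∂P
      = ∫ ω, m ^ 2 * (empiricalMean Z f ω / empiricalMean Z g ω - r) ^ 2 ∂P :=
        (integral_const_mul _ _).symm
    _ ≤ ∫ ω, (2 * (empiricalMean Z h ω - ∫ z, h z ∂ξ) ^ 2
          + 2 * a ^ 2 * (empiricalMean Z g ω - m) ^ 2) ∂P :=
        integral_mono_of_nonneg (Filter.Eventually.of_forall fun ω => by positivity)
          (((hint h hh2 _).const_mul 2).add ((hint g hg2 _).const_mul _))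
          (Filter.Eventually.of_forall hpt)
    _ = 2 * (Var[h; ξ] / k) + 2 * a ^ 2 * (Var[g; ξ] / k) := by
        rw [integral_add ((hint h hh2 _).const_mul 2) ((hint g hg2 _).const_mul _),
          integral_const_mul, integral_const_mul,
          integral_sq_empiricalMean_sub (u := h) hZ hindep (hf.sub (hg.const_mul r)) hh2,
          integral_sq_empiricalMean_sub hZ hindep hg hg2]
    _ ≤ 2 * (a ^ 2 * (b * m ^ 2) / k) + 2 * a ^ 2 * (b * m ^ 2 / k) := by
        gcongr
    _ = m ^ 2 * (4 * a ^ 2 * b / k) := by ring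

end RatioEstimator

/-- Bias bound for the ratio of empirical integrals (Proposition 2.1, second ($L^2$) bound). -/
theorem stmt_1
    {α Ω : Type*} [MeasurableSpace α] [MeasurableSpace Ω]
    (P : Measure Ω) [IsProbabilityMeasure P]
    (ξ : Measure α) [IsProbabilityMeasure ξ]
    (k : ℕ) (hk : 1 ≤ k)
    (Z : Fin k → Ω → α)
    (hmeas : ∀ i, Measurable (Z i))
    (hindep : iIndepFun Z P)
    (hlaw : ∀ i, P.map (Z i) = ξ)
    (f g : α → ℝ) (hf : Measurable f) (hg : Measurable g)
    (F c C : ℝ) (hF : ∀ z, |f z| ≤ F)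
    (hc : 0 < c) (hgc : ∀ z, c ≤ g z) (hgC : ∀ z, g z ≤ C)
    (a b : ℝ)
    (ha : ∀ z z', |f z / g z - f z' / g z'| ≤ a)
    (hb : ∀ z z', g z / g z' ≤ b) :
    Real.sqrt (∫ ω, (((k : ℝ)⁻¹ * ∑ i, f (Z i ω)) / ((k : ℝ)⁻¹ * ∑ i, g (Z i ω))
      - (∫ z, f z ∂ξ) / (∫ z, g z ∂ξ)) ^ 2 ∂P)
      ≤ 2 * a * b / Real.sqrt k := by
  have : NeZero k := ⟨by omega⟩
  obtain ⟨z₀⟩ := nonempty_of_isProbabilityMeasure ξ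
  have hgpos (z : α) : 0 < g z := hc.trans_le (hgc z)
  have hf2 : MemLp f 2 ξ := MemLp.of_bound hf.aestronglyMeasurable F (ae_of_all _ hF)
  have hg2 : MemLp g 2 ξ := MemLp.of_bound hg.aestronglyMeasurable C
    (ae_of_all _ fun z => by rw [Real.norm_eq_abs, abs_of_pos (hgpos z)]; exact hgC z)
  have ha0 : 0 ≤ a := by simpa using ha z₀ z₀
  have hb1 : 1 ≤ b := by simpa [(hgpos z₀).ne'] using hb z₀ z₀
  have hmse := integral_sq_empiricalMean_div_sub_le (fun i => ⟨hmeas i, hlaw i⟩) hindep hf hg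
    hf2 hg2 hgpos ha fun z z' => (div_le_iff₀ (hgpos z')).1 (hb z z')
  calc _ ≤ Real.sqrt (4 * a ^ 2 * b / k) := Real.sqrt_le_sqrt hmse
    _ ≤ Real.sqrt ((2 * a * b) ^ 2 / k) := by gcongr; nlinarith
    _ = 2 * a * b / Real.sqrt k := by
        rw [Real.sqrt_div (sq_nonneg _), Real.sqrt_sq (by positivity)]
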